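/- For every fixed r > 0: A(r,x) > 0 for all x ∈ ℝ, A(r,−x) = A(r,x) for all x ∈ ℝ, and the function x ↦ A(r,x) is monotone nondecreasing on [0,∞). -/

import Mathlib

/-!
Write `u = πx/(2r)` and `b = π²k/r`. The terms of index `k` and `-k` together equal
`(cosh²u / cosh²(u - b) + cosh²u / cosh²(u + b)) / sinh²b`, and the bracket is the rational
function `2(T + 1)(CT + 1)/(T + C)²` of `T = cosh 2u` and `C = cosh 2b ≥ 1`, which is
nondecreasing in `T ≥ 0`. Since `x ↦ cosh(πx/r)` is nondecreasing on `[0, ∞)`, so is every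
symmetrized pair of terms, hence the whole series. Evenness is the substitution `k ↦ -k`,
and summability comes from `sinh² b ≥ b²`.
-/

open Real

/-- The annulus function
`A(r,x) = (π²/(4r²)) ∑_{k ≠ 0} cosh(πx/(2r))² / (sinh(π²k/r)² cosh(π(x-2πk)/(2r))²)`. -/
noncomputable def Afun (r x : ℝ) : ℝ :=
  (π ^ 2 / (4 * r ^ 2)) * ∑' k : {k : ℤ // k ≠ 0},
    (Real.cosh (π * x / (2 * r))) ^ 2 /
      ((Real.sinh (π ^ 2 * ((k : ℤ) : ℝ) / r)) ^ 2 *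
        (Real.cosh (π * (x - 2 * π * ((k : ℤ) : ℝ)) / (2 * r))) ^ 2)

open Set

noncomputable def annulusTerm (r x c : ℝ) : ℝ :=
  cosh (π * x / (2 * r)) ^ 2 /
    (sinh (π ^ 2 * c / r) ^ 2 * cosh (π * (x - 2 * π * c) / (2 * r)) ^ 2)

lemma Afun_eq_tsum_annulusTerm (r x : ℝ) :
    Afun r x = π ^ 2 / (4 * r ^ 2) * ∑' k : ℤ, annulusTerm r x k := by
  unfold Afun
  congr 1
  refine tsum_subtype_eq_of_support_subset (f := fun k : ℤ => annulusTerm r x k) ?_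
  intro k hk h0
  exact hk (by simp [annulusTerm, show k = 0 from h0])

lemma annulusTerm_nonneg (r x c : ℝ) : 0 ≤ annulusTerm r x c := by
  unfold annulusTerm; positivity

lemma annulusTerm_pos {r : ℝ} (hr : r ≠ 0) (x : ℝ) {c : ℝ} (hc : c ≠ 0) :
    0 < annulusTerm r x c := by
  have hs : sinh (π ^ 2 * c / r) ≠ 0 := by
    rw [Ne, sinh_eq_zero]; positivity
  unfold annulusTerm; positivity

lemma annulusTerm_neg_neg (r x c : ℝ) : annulusTerm r (-x) (-c) = annulusTerm r x c := by
  unfold annulusTerm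
  rw [show π * -x / (2 * r) = -(π * x / (2 * r)) by ring,
    show π ^ 2 * -c / r = -(π ^ 2 * c / r) by ring,
    show π * (-x - 2 * π * -c) / (2 * r) = -(π * (x - 2 * π * c) / (2 * r)) by ring,
    cosh_neg, cosh_neg, sinh_neg, neg_sq]

lemma annulusTerm_le (r x c : ℝ) :
    annulusTerm r x c ≤ cosh (π * x / (2 * r)) ^ 2 / (π ^ 2 * c / r) ^ 2 := by
  rcases eq_or_ne (π ^ 2 * c / r) 0 with hb | hb
  · simp [annulusTerm, hb]
  have hsinh : (π ^ 2 * c / r) ^ 2 ≤ sinh (π ^ 2 * c / r) ^ 2 :=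
    sq_le_sq.2 (by rw [abs_sinh]; exact self_le_sinh_iff.2 (abs_nonneg _))
  exact div_le_div_of_nonneg_left (sq_nonneg _) (by positivity)
    (hsinh.trans (le_mul_of_one_le_right (sq_nonneg _) (one_le_pow₀ (one_le_cosh _))))

lemma summable_annulusTerm (r x : ℝ) : Summable fun k : ℤ => annulusTerm r x k := by
  refine .of_nonneg_of_le (fun k => annulusTerm_nonneg r x k) (fun k => annulusTerm_le r x k)
    (((summable_one_div_int_pow.2 one_lt_two).mul_left
      (cosh (π * x / (2 * r)) ^ 2 / (π ^ 2 / r) ^ 2)).congr fun k => ?_)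
  rw [mul_one_div, div_div, ← mul_pow, div_mul_eq_mul_div]

lemma annulusTerm_add_annulusTerm_neg {r : ℝ} (hr : r ≠ 0) (x c : ℝ) :
    annulusTerm r x c + annulusTerm r x (-c) =
      (cosh (π * x / (2 * r)) ^ 2 / cosh (π * x / (2 * r) - π ^ 2 * c / r) ^ 2 +
        cosh (π * x / (2 * r)) ^ 2 / cosh (π * x / (2 * r) + π ^ 2 * c / r) ^ 2) /
        sinh (π ^ 2 * c / r) ^ 2 := by
  unfold annulusTerm
  rw [show π * (x - 2 * π * c) / (2 * r) = π * x / (2 * r) - π ^ 2 * c / r by field_simp,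
    show π * (x - 2 * π * -c) / (2 * r) = π * x / (2 * r) + π ^ 2 * c / r by field_simp; ring,
    show π ^ 2 * -c / r = -(π ^ 2 * c / r) by ring, sinh_neg, neg_sq]
  ring

lemma cosh_sq_div_cosh_sub_sq_add_cosh_sq_div_cosh_add_sq (u b : ℝ) :
    cosh u ^ 2 / cosh (u - b) ^ 2 + cosh u ^ 2 / cosh (u + b) ^ 2 =
      2 * (cosh (2 * u) + 1) * (cosh (2 * b) * cosh (2 * u) + 1) /
        (cosh (2 * u) + cosh (2 * b)) ^ 2 := by
  have h1 : cosh (u - b) ^ 2 ≠ 0 := (pow_pos (cosh_pos _) 2).ne'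
  have h2 : cosh (u + b) ^ 2 ≠ 0 := (pow_pos (cosh_pos _) 2).ne'
  have h3 : (cosh (2 * u) + cosh (2 * b)) ^ 2 ≠ 0 := by positivity
  rw [div_add_div _ _ h1 h2, div_eq_div_iff (mul_ne_zero h1 h2) h3]
  have := exp_pos u
  have := exp_pos b
  simp only [cosh_eq, two_mul, exp_add, exp_sub, exp_neg, neg_sub, neg_add]
  field_simp
  ring

lemma monotoneOn_two_mul_add_one_mul_div_add_sq {C : ℝ} (hC : 1 ≤ C) :
    MonotoneOn (fun t => 2 * (t + 1) * (C * t + 1) / (t + C) ^ 2) (Ici 0) := by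
  intro s (hs : 0 ≤ s) t (ht : 0 ≤ t) hst
  rw [div_le_div_iff₀ (by positivity) (by positivity)]
  set q := t + s + s * t + 2 * C + C * t + C * s + 2 * C * s * t + C ^ 2 + C ^ 2 * t + C ^ 2 * s
  have hq : 0 ≤ q := by
    have : 0 ≤ C := by linarith
    positivity
  have hdiff : 2 * (t + 1) * (C * t + 1) * (s + C) ^ 2 - 2 * (s + 1) * (C * s + 1) * (t + C) ^ 2 =
      2 * ((t - s) * ((C - 1) * q)) := by
    ring
  linarith [mul_nonneg (sub_nonneg.2 hst) (mul_nonneg (sub_nonneg.2 hC) hq)]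

lemma monotoneOn_cosh_sq_div_cosh_sub_sq_add_cosh_sq_div_cosh_add_sq (b : ℝ) :
    MonotoneOn (fun u => cosh u ^ 2 / cosh (u - b) ^ 2 + cosh u ^ 2 / cosh (u + b) ^ 2)
      (Ici 0) := by
  intro u (hu : 0 ≤ u) v (hv : 0 ≤ v) huv
  simp only [cosh_sq_div_cosh_sub_sq_add_cosh_sq_div_cosh_add_sq]
  refine monotoneOn_two_mul_add_one_mul_div_add_sq (one_le_cosh _)
    (zero_le_one.trans (one_le_cosh _)) (zero_le_one.trans (one_le_cosh _)) ?_
  rw [cosh_le_cosh, abs_of_nonneg (by linarith), abs_of_nonneg (by linarith)]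
  linarith

lemma monotoneOn_annulusTerm_add_annulusTerm_neg {r : ℝ} (hr : 0 < r) (c : ℝ) :
    MonotoneOn (fun x => annulusTerm r x c + annulusTerm r x (-c)) (Ici 0) := by
  intro x (hx : 0 ≤ x) y (hy : 0 ≤ y) hxy
  simp only [annulusTerm_add_annulusTerm_neg hr.ne']
  gcongr ?_ / _
  exact monotoneOn_cosh_sq_div_cosh_sub_sq_add_cosh_sq_div_cosh_add_sq _
    (by show 0 ≤ π * x / (2 * r); positivity) (by show 0 ≤ π * y / (2 * r); positivity)
    (by gcongr)

lemma tsum_le_tsum_of_add_neg_le {f g : ℤ → ℝ} (hf : Summable f) (hg : Summable g)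
    (h : ∀ k, f k + f (-k) ≤ g k + g (-k)) : ∑' k, f k ≤ ∑' k, g k := by
  have hpair : ∀ φ : ℤ → ℝ, Summable φ → ∑' k, (φ k + φ (-k)) = 2 * ∑' k, φ k := by
    intro φ hφ
    have hneg : ∑' k, φ (-k) = ∑' k, φ k := (Equiv.neg ℤ).tsum_eq φ
    rw [Summable.tsum_add (g := fun k => φ (-k)) hφ (hφ.comp_injective neg_injective), hneg,
      two_mul]
  have := hpair f hf ▸ hpair g hg ▸ Summable.tsum_le_tsum h
    (hf.add (hf.comp_injective neg_injective)) (hg.add (hg.comp_injective neg_injective))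
  linarith

/-- For every `r > 0`: `A(r,·)` is positive, even, and nondecreasing in `|x|`. -/
theorem stmt6 : ∀ r : ℝ, 0 < r →
    (∀ x : ℝ, 0 < Afun r x) ∧
    (∀ x : ℝ, Afun r (-x) = Afun r x) ∧
    MonotoneOn (Afun r) (Set.Ici (0:ℝ)) := by
  intro r hr
  refine ⟨fun x => ?_, fun x => ?_, fun x hx y hy hxy => ?_⟩
  · rw [Afun_eq_tsum_annulusTerm]
    exact mul_pos (by positivity) <| (summable_annulusTerm r x).tsum_pos
      (fun k => annulusTerm_nonneg r x k) 1 (annulusTerm_pos hr.ne' x (by norm_num))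
  · simp only [Afun_eq_tsum_annulusTerm]
    rw [← (Equiv.neg ℤ).tsum_eq]
    simp [← annulusTerm_neg_neg r x]
  · simp only [Afun_eq_tsum_annulusTerm]
    gcongr 1
    refine tsum_le_tsum_of_add_neg_le (summable_annulusTerm r x) (summable_annulusTerm r y)
      fun k => ?_
    simpa only [Int.cast_neg] using monotoneOn_annulusTerm_add_annulusTerm_neg hr k hx hy hxy
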